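/- Assume d·γ ≤ 2·γ*. There exists c > 0, depending only on ℓ, α, m, d, J, γ, γ*, such that for every λ ∈ ℝ with |λ| ≥ 1 and every solution (u, v, w, z) of the resolvent system with data (f₁, f₂, f₄): |u'(0)|·|u'''(0)| ≤ c·(‖U‖·‖F‖ + ‖F‖²) and |u'(0)|·|u''(0)| ≤ c·(‖U‖·‖F‖ + ‖F‖²). -/

import Mathlib

/-!
Pairing the resolvent system with the conjugate state and integrating by parts twice gives the
energy identity: the dissipation `D = γ|w|² + dγ Re(w z̄) + dγ*|z|²` equals `Re ⟨F, U⟩`, so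
`D ≤ 4‖U‖‖F‖` by Cauchy–Schwarz. When `dγ ≤ 2γ*` the dissipation dominates `|w|²` and `|z|²`,
so `w`, `z`, `f₄` and `f₁'(0)` (recall `f₁'(ℓ) = 0`) are all `O(√(‖U‖‖F‖ + ‖F‖²))`.
Differentiating the first equation at `0` bounds `|λ||u'(0)|` by `|z| + |f₁'(0)|`, and the two
boundary equations bound `α|u'''(0)|` and `α|u''(0)|` by `(1 + |λ|)` times the same scale;
for `|λ| ≥ 1` the factor `|λ|` cancels in the products.
-/

open MeasureTheory ComplexConjugate

/-- A solution `(λ, u, v, w, z)` (with `w = v 0`, `z = v1 0`) of the resolvent system of the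
hybrid Euler–Bernoulli beam with tip body, with data `(f₁, f₂, f₄)`. The fields `u1,…,u4`
(resp. `v1, v2`, `f1d, f1dd`) are the successive derivatives of `u` (resp. `v`, `f1`)
on `[0,ℓ]`. -/
structure ResolventSol (ℓ α m d J γ γs : ℝ) where
  lam : ℝ
  u : ℝ → ℂ
  u1 : ℝ → ℂ
  u2 : ℝ → ℂ
  u3 : ℝ → ℂ
  u4 : ℝ → ℂ
  v : ℝ → ℂ
  v1 : ℝ → ℂ
  v2 : ℝ → ℂ
  f1 : ℝ → ℂ
  f1d : ℝ → ℂ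
  f1dd : ℝ → ℂ
  f2 : ℝ → ℂ
  f41 : ℂ
  f42 : ℂ
  hu1 : ∀ x ∈ Set.Icc (0:ℝ) ℓ, HasDerivWithinAt u (u1 x) (Set.Icc 0 ℓ) x
  hu2 : ∀ x ∈ Set.Icc (0:ℝ) ℓ, HasDerivWithinAt u1 (u2 x) (Set.Icc 0 ℓ) x
  hu3 : ∀ x ∈ Set.Icc (0:ℝ) ℓ, HasDerivWithinAt u2 (u3 x) (Set.Icc 0 ℓ) x
  hu4 : ∀ x ∈ Set.Icc (0:ℝ) ℓ, HasDerivWithinAt u3 (u4 x) (Set.Icc 0 ℓ) x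
  hu4c : ContinuousOn u4 (Set.Icc 0 ℓ)
  hv1 : ∀ x ∈ Set.Icc (0:ℝ) ℓ, HasDerivWithinAt v (v1 x) (Set.Icc 0 ℓ) x
  hv2 : ∀ x ∈ Set.Icc (0:ℝ) ℓ, HasDerivWithinAt v1 (v2 x) (Set.Icc 0 ℓ) x
  hv2c : ContinuousOn v2 (Set.Icc 0 ℓ)
  hf11 : ∀ x ∈ Set.Icc (0:ℝ) ℓ, HasDerivWithinAt f1 (f1d x) (Set.Icc 0 ℓ) x
  hf12 : ∀ x ∈ Set.Icc (0:ℝ) ℓ, HasDerivWithinAt f1d (f1dd x) (Set.Icc 0 ℓ) x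
  hf1c : ContinuousOn f1dd (Set.Icc 0 ℓ)
  hf2c : ContinuousOn f2 (Set.Icc 0 ℓ)
  res1 : ∀ x ∈ Set.Icc (0:ℝ) ℓ, Complex.I * (lam : ℂ) * u x - v x = f1 x
  res2 : ∀ x ∈ Set.Icc (0:ℝ) ℓ, Complex.I * (lam : ℂ) * v x + (α : ℂ) * u4 x = f2 x
  res3 : Complex.I * (lam : ℂ) * ((m : ℂ) * v 0 + (m : ℂ) * (d : ℂ) * v1 0) +
      (γ : ℂ) * v 0 + (α : ℂ) * u3 0 = (m : ℂ) * f41 + (m : ℂ) * (d : ℂ) * f42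
  res4 : Complex.I * (lam : ℂ) * ((m : ℂ) * (d : ℂ) * v 0 +
        ((J : ℂ) + (m : ℂ) * (d : ℂ) ^ 2) * v1 0) +
      (d : ℂ) * (γ : ℂ) * v 0 + (d : ℂ) * (γs : ℂ) * v1 0 - (α : ℂ) * u2 0 =
      (m : ℂ) * (d : ℂ) * f41 + ((J : ℂ) + (m : ℂ) * (d : ℂ) ^ 2) * f42
  bcu : u ℓ = 0
  bcu1 : u1 ℓ = 0
  bcv : v ℓ = 0
  bcv1 : v1 ℓ = 0

variable {ℓ α m d J γ γs : ℝ}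

/-- The phase-space norm `‖U‖` of a resolvent solution. -/
noncomputable def normU (R : ResolventSol ℓ α m d J γ γs) : ℝ :=
  Real.sqrt ((∫ x in (0:ℝ)..ℓ, (‖R.v x‖ ^ 2 + α * ‖R.u2 x‖ ^ 2)) +
    m * ‖R.v 0‖ ^ 2 + 2 * m * d * (R.v 0 * conj (R.v1 0)).re +
    (J + m * d ^ 2) * ‖R.v1 0‖ ^ 2)

/-- The phase-space norm `‖F‖` of the data of a resolvent solution. -/
noncomputable def normF (R : ResolventSol ℓ α m d J γ γs) : ℝ :=
  Real.sqrt ((∫ x in (0:ℝ)..ℓ, (‖R.f2 x‖ ^ 2 + α * ‖R.f1dd x‖ ^ 2)) +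
    m * ‖R.f41‖ ^ 2 + 2 * m * d * (R.f41 * conj R.f42).re +
    (J + m * d ^ 2) * ‖R.f42‖ ^ 2)

open Set

theorem sq_integral_mul_le_mul_integral_sq {X : Type*} [MeasurableSpace X] {μ : Measure X}
    {f g : X → ℝ} (hf : Integrable (fun x => f x ^ 2) μ) (hg : Integrable (fun x => g x ^ 2) μ)
    (hfg : Integrable (fun x => f x * g x) μ) :
    (∫ x, f x * g x ∂μ) ^ 2 ≤ (∫ x, f x ^ 2 ∂μ) * ∫ x, g x ^ 2 ∂μ := by
  have hquad : ∀ t : ℝ, 0 ≤ (∫ x, f x ^ 2 ∂μ) * (t * t) + 2 * (∫ x, f x * g x ∂μ) * t +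
      ∫ x, g x ^ 2 ∂μ := fun t =>
    calc 0 ≤ ∫ x, (t * f x + g x) ^ 2 ∂μ := integral_nonneg fun x => sq_nonneg _
      _ = ∫ x, (t ^ 2 * f x ^ 2 + 2 * t * (f x * g x) + g x ^ 2) ∂μ := by congr! 2; ring
      _ = _ := by
        have hsum : Integrable (fun x => t ^ 2 * f x ^ 2 + 2 * t * (f x * g x)) μ :=
          (hf.const_mul _).add (hfg.const_mul _)
        rw [integral_add hsum hg, integral_add (hf.const_mul _) (hfg.const_mul _),
          integral_const_mul, integral_const_mul]
        ring
  have := discrim_le_zero hquad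
  rw [discrim] at this
  linarith

theorem sq_norm_integral_mul_conj_le {a b : ℝ} (hab : a ≤ b) {f g : ℝ → ℂ}
    (hf : ContinuousOn f (Icc a b)) (hg : ContinuousOn g (Icc a b)) :
    ‖∫ x in a..b, f x * conj (g x)‖ ^ 2 ≤
      (∫ x in a..b, ‖f x‖ ^ 2) * ∫ x in a..b, ‖g x‖ ^ 2 := by
  have hint : ∀ {h : ℝ → ℝ}, ContinuousOn h (Icc a b) → Integrable h (volume.restrict (Ioc a b)) :=
    fun hh => (hh.integrableOn_Icc).mono_set Ioc_subset_Icc_self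
  calc ‖∫ x in a..b, f x * conj (g x)‖ ^ 2 ≤ (∫ x in a..b, ‖f x‖ * ‖g x‖) ^ 2 := by
        gcongr
        refine (intervalIntegral.norm_integral_le_integral_norm hab).trans_eq ?_
        simp only [norm_mul, Complex.norm_conj]
    _ ≤ _ := by
        simp only [intervalIntegral.integral_of_le hab]
        exact sq_integral_mul_le_mul_integral_sq (hint (hf.norm.pow 2)) (hint (hg.norm.pow 2))
          (hint (hf.norm.mul hg.norm))

theorem integral_mul_conj_self {a b : ℝ} (f : ℝ → ℂ) :
    ∫ x in a..b, f x * conj (f x) = ((∫ x in a..b, ‖f x‖ ^ 2 : ℝ) : ℂ) := by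
  rw [← intervalIntegral.integral_ofReal]
  simp only [Complex.mul_conj, Complex.normSq_eq_norm_sq, Complex.ofReal_pow]

theorem integral_deriv_mul_conj {a b : ℝ} (hab : a ≤ b) {f f' g g' : ℝ → ℂ}
    (hf : ∀ x ∈ Icc a b, HasDerivWithinAt f (f' x) (Icc a b) x)
    (hg : ∀ x ∈ Icc a b, HasDerivWithinAt g (g' x) (Icc a b) x)
    (hf' : ContinuousOn f' (Icc a b)) (hg' : ContinuousOn g' (Icc a b)) :
    ∫ x in a..b, f' x * conj (g x) =
      f b * conj (g b) - f a * conj (g a) - ∫ x in a..b, f x * conj (g' x) := by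
  rw [← uIcc_of_le hab] at hf hg hf' hg'
  have h := intervalIntegral.integral_mul_deriv_eq_deriv_mul_of_hasDerivWithinAt
    (fun x hx => (hg x hx).star) hf hg'.star.intervalIntegrable hf'.intervalIntegrable
  simp only [← starRingEnd_apply] at h
  simp only [mul_comm (f' _), mul_comm (f _), h]

theorem integral_eq_sub_of_hasDerivWithinAt_Icc {E : Type*} [NormedAddCommGroup E]
    [NormedSpace ℝ E] [CompleteSpace E] {a b : ℝ} (hab : a ≤ b) {f f' : ℝ → E}
    (hf : ∀ x ∈ Icc a b, HasDerivWithinAt f (f' x) (Icc a b) x)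
    (hf' : ContinuousOn f' (Icc a b)) : ∫ x in a..b, f' x = f b - f a :=
  intervalIntegral.integral_eq_sub_of_hasDerivAt_of_le hab (HasDerivWithinAt.continuousOn hf)
    (fun x hx => (hf x (Ioo_subset_Icc_self hx)).hasDerivAt (Icc_mem_nhds hx.1 hx.2))
    (hf'.mono (uIcc_of_le hab).subset).intervalIntegrable

theorem eqOn_of_hasDerivWithinAt_Icc {E : Type*} [NormedAddCommGroup E] [NormedSpace ℝ E]
    {a b : ℝ} (hab : a < b) {f g f' g' : ℝ → E} (hfg : EqOn f g (Icc a b))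
    (hf : ∀ x ∈ Icc a b, HasDerivWithinAt f (f' x) (Icc a b) x)
    (hg : ∀ x ∈ Icc a b, HasDerivWithinAt g (g' x) (Icc a b) x) : EqOn f' g' (Icc a b) :=
  fun x hx => (uniqueDiffOn_Icc hab x hx).eq_deriv _ (hf x hx) ((hg x hx).congr_of_mem hfg hx)

theorem mul_re_le_mul_of_sq_norm_le {c A B P Q : ℝ} {z : ℂ} (hc : 0 ≤ c) (hA : 0 ≤ A)
    (hP : 0 ≤ P) (hQ : 0 ≤ Q) (hz : ‖z‖ ^ 2 ≤ A * B) (hAP : c * A ≤ P ^ 2)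
    (hBQ : c * B ≤ Q ^ 2) : c * z.re ≤ P * Q := by
  have hre : z.re ^ 2 ≤ ‖z‖ ^ 2 := by
    rw [sq, Complex.sq_norm]; exact Complex.re_sq_le_normSq z
  refine (le_abs_self _).trans (abs_le_of_sq_le_sq ?_ (mul_nonneg hP hQ))
  calc (c * z.re) ^ 2 ≤ c ^ 2 * (A * B) := by
        rw [mul_pow]; exact mul_le_mul_of_nonneg_left (hre.trans hz) (sq_nonneg c)
    _ = (c * A) * (c * B) := by ring
    _ ≤ (c * A) * Q ^ 2 := mul_le_mul_of_nonneg_left hBQ (mul_nonneg hc hA)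
    _ ≤ P ^ 2 * Q ^ 2 := mul_le_mul_of_nonneg_right hAP (sq_nonneg Q)
    _ = (P * Q) ^ 2 := by ring

theorem norm_ofReal_mul_of_nonneg {c : ℝ} (hc : 0 ≤ c) (z : ℂ) : ‖(c : ℂ) * z‖ = c * ‖z‖ := by
  rw [norm_mul, Complex.norm_real, Real.norm_of_nonneg hc]

theorem norm_I_mul_ofReal_mul (t : ℝ) (z : ℂ) : ‖Complex.I * t * z‖ = |t| * ‖z‖ := by
  rw [norm_mul, norm_mul, Complex.norm_I, one_mul, Complex.norm_real, Real.norm_eq_abs]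

theorem mul_le_of_mul_le_of_le_add_mul {t x y A G H : ℝ} (ht : 1 ≤ t) (hx : 0 ≤ x) (hy : 0 ≤ y)
    (hG : 0 ≤ G) (hxA : t * x ≤ A) (hyG : y ≤ G + t * H) : x * y ≤ A * (G + H) := by
  have hA : 0 ≤ A := (mul_nonneg (zero_le_one.trans ht) hx).trans hxA
  refine le_of_mul_le_mul_left ?_ (zero_lt_one.trans_le ht)
  calc t * (x * y) = (t * x) * y := by ring
    _ ≤ A * (G + t * H) := mul_le_mul hxA hyG hy hA
    _ ≤ A * (t * (G + H)) := mul_le_mul_of_nonneg_left (by nlinarith) hA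
    _ = t * (A * (G + H)) := by ring

theorem sqrt_energy_sq (hℓ : 0 ≤ ℓ) (hα : 0 ≤ α) (hm : 0 ≤ m) (hJ : 0 ≤ J) {p q : ℝ → ℂ}
    (hp : ContinuousOn p (Icc 0 ℓ)) (hq : ContinuousOn q (Icc 0 ℓ)) (a b : ℂ) :
    √((∫ x in (0:ℝ)..ℓ, (‖p x‖ ^ 2 + α * ‖q x‖ ^ 2)) + m * ‖a‖ ^ 2 +
        2 * m * d * (a * conj b).re + (J + m * d ^ 2) * ‖b‖ ^ 2) ^ 2 =
      (∫ x in (0:ℝ)..ℓ, ‖p x‖ ^ 2) + α * (∫ x in (0:ℝ)..ℓ, ‖q x‖ ^ 2) +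
        m * ‖a + d * b‖ ^ 2 + J * ‖b‖ ^ 2 := by
  have hint : ∫ x in (0:ℝ)..ℓ, (‖p x‖ ^ 2 + α * ‖q x‖ ^ 2) =
      (∫ x in (0:ℝ)..ℓ, ‖p x‖ ^ 2) + ∫ x in (0:ℝ)..ℓ, α * ‖q x‖ ^ 2 :=
    intervalIntegral.integral_add ((hp.norm.pow 2).intervalIntegrable_of_Icc hℓ)
      (((hq.norm.pow 2).intervalIntegrable_of_Icc hℓ).const_mul α)
  have hshift : ‖a + d * b‖ ^ 2 = ‖a‖ ^ 2 + 2 * d * (a * conj b).re + d ^ 2 * ‖b‖ ^ 2 := by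
    simp only [Complex.sq_norm, Complex.normSq_add, Complex.normSq_ofReal,
      map_mul, Complex.conj_ofReal, Complex.mul_re, Complex.mul_im, Complex.ofReal_re,
      Complex.ofReal_im]
    ring
  have hp0 : 0 ≤ ∫ x in (0:ℝ)..ℓ, ‖p x‖ ^ 2 :=
    intervalIntegral.integral_nonneg hℓ fun x _ => sq_nonneg _
  have hq0 : 0 ≤ ∫ x in (0:ℝ)..ℓ, ‖q x‖ ^ 2 :=
    intervalIntegral.integral_nonneg hℓ fun x _ => sq_nonneg _
  rw [Real.sq_sqrt] <;> rw [hint, intervalIntegral.integral_const_mul]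
  · rw [hshift]; ring
  · nlinarith [sq_nonneg ‖a + d * b‖, sq_nonneg ‖b‖]

noncomputable def boundaryConst (ℓ α m d J γ : ℝ) : ℝ :=
  8 / γ + 16 / (γ * d ^ 2) + (2 / m + 2 * d ^ 2 / J) + 1 / J + ℓ / α

namespace ResolventSol

variable (R : ResolventSol ℓ α m d J γ γs)

theorem res1_deriv (hℓ : 0 < ℓ) :
    EqOn (fun x => Complex.I * R.lam * R.u1 x - R.v1 x) R.f1d (Icc 0 ℓ) :=
  eqOn_of_hasDerivWithinAt_Icc hℓ R.res1
    (fun x hx => ((R.hu1 x hx).const_mul _).sub (R.hv1 x hx)) R.hf11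

theorem res1_deriv2 (hℓ : 0 < ℓ) :
    EqOn (fun x => Complex.I * R.lam * R.u2 x - R.v2 x) R.f1dd (Icc 0 ℓ) :=
  eqOn_of_hasDerivWithinAt_Icc hℓ (R.res1_deriv hℓ)
    (fun x hx => ((R.hu2 x hx).const_mul _).sub (R.hv2 x hx)) R.hf12

theorem f1d_zero (hℓ : 0 < ℓ) : R.f1d 0 = -∫ x in (0:ℝ)..ℓ, R.f1dd x := by
  have hℓ' : R.f1d ℓ = 0 := by
    simpa [R.bcu1, R.bcv1] using (R.res1_deriv hℓ (right_mem_Icc.2 hℓ.le)).symm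
  rw [integral_eq_sub_of_hasDerivWithinAt_Icc hℓ.le R.hf12 R.hf1c, hℓ', zero_sub, neg_neg]

theorem integral_f2_mul_conj_v (hℓ : 0 < ℓ) :
    ∫ x in (0:ℝ)..ℓ, R.f2 x * conj (R.v x) =
      Complex.I * R.lam * ((∫ x in (0:ℝ)..ℓ, ‖R.v x‖ ^ 2 : ℝ) : ℂ) +
        α * (R.u2 0 * conj (R.v1 0) - R.u3 0 * conj (R.v 0) -
          Complex.I * R.lam * ((∫ x in (0:ℝ)..ℓ, ‖R.u2 x‖ ^ 2 : ℝ) : ℂ) -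
          ∫ x in (0:ℝ)..ℓ, R.u2 x * conj (R.f1dd x)) := by
  have hIcc : uIcc 0 ℓ = Icc 0 ℓ := uIcc_of_le hℓ.le
  have hii : ∀ {h : ℝ → ℂ}, ContinuousOn h (Icc 0 ℓ) → IntervalIntegrable h volume 0 ℓ :=
    fun hh => hh.intervalIntegrable_of_Icc hℓ.le
  have cv := HasDerivWithinAt.continuousOn R.hv1
  have cv1 := HasDerivWithinAt.continuousOn R.hv2
  have cu2 := HasDerivWithinAt.continuousOn R.hu3
  have cu3 := HasDerivWithinAt.continuousOn R.hu4
  have cu4 := R.hu4c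
  have cf1dd := R.hf1c
  have h_res2 : ∫ x in (0:ℝ)..ℓ, R.f2 x * conj (R.v x) =
      Complex.I * R.lam * (∫ x in (0:ℝ)..ℓ, R.v x * conj (R.v x)) +
        α * ∫ x in (0:ℝ)..ℓ, R.u4 x * conj (R.v x) := by
    rw [← intervalIntegral.integral_const_mul, ← intervalIntegral.integral_const_mul,
      ← intervalIntegral.integral_add (hii (by fun_prop)) (hii (by fun_prop))]
    refine intervalIntegral.integral_congr fun x hx => ?_
    rw [hIcc] at hx
    simp only [← R.res2 x hx]
    ring
  have h_ibp1 := integral_deriv_mul_conj hℓ.le R.hu4 R.hv1 cu4 cv1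
  have h_ibp2 := integral_deriv_mul_conj hℓ.le R.hu3 R.hv2 cu3 R.hv2c
  have h_v2 : ∫ x in (0:ℝ)..ℓ, R.u2 x * conj (R.v2 x) =
      -(Complex.I * R.lam) * (∫ x in (0:ℝ)..ℓ, R.u2 x * conj (R.u2 x)) -
        ∫ x in (0:ℝ)..ℓ, R.u2 x * conj (R.f1dd x) := by
    rw [← intervalIntegral.integral_const_mul,
      ← intervalIntegral.integral_sub (hii (by fun_prop)) (hii (by fun_prop))]
    refine intervalIntegral.integral_congr fun x hx => ?_
    rw [hIcc] at hx
    simp only [← R.res1_deriv2 hℓ hx, map_sub, map_mul, Complex.conj_I, Complex.conj_ofReal]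
    ring
  simp only [R.bcv, R.bcv1, map_zero, mul_zero, zero_sub] at h_ibp1 h_ibp2
  rw [integral_mul_conj_self] at h_res2 h_v2
  rw [h_res2, h_ibp1, h_ibp2, h_v2]
  ring

theorem normU_sq (hℓ : 0 ≤ ℓ) (hα : 0 ≤ α) (hm : 0 ≤ m) (hJ : 0 ≤ J) :
    normU R ^ 2 = (∫ x in (0:ℝ)..ℓ, ‖R.v x‖ ^ 2) + α * (∫ x in (0:ℝ)..ℓ, ‖R.u2 x‖ ^ 2) +
      m * ‖R.v 0 + d * R.v1 0‖ ^ 2 + J * ‖R.v1 0‖ ^ 2 :=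
  sqrt_energy_sq hℓ hα hm hJ (HasDerivWithinAt.continuousOn R.hv1)
    (HasDerivWithinAt.continuousOn R.hu3) _ _

theorem normF_sq (hℓ : 0 ≤ ℓ) (hα : 0 ≤ α) (hm : 0 ≤ m) (hJ : 0 ≤ J) :
    normF R ^ 2 = (∫ x in (0:ℝ)..ℓ, ‖R.f2 x‖ ^ 2) + α * (∫ x in (0:ℝ)..ℓ, ‖R.f1dd x‖ ^ 2) +
      m * ‖R.f41 + d * R.f42‖ ^ 2 + J * ‖R.f42‖ ^ 2 :=
  sqrt_energy_sq hℓ hα hm hJ R.hf2c R.hf1c _ _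

noncomputable def dissipation : ℝ :=
  γ * ‖R.v 0‖ ^ 2 + d * γ * (R.v 0 * conj (R.v1 0)).re + d * γs * ‖R.v1 0‖ ^ 2

/-- The `iλ` terms have zero real part because the mass matrix `!![m, m d; m d, J + m d²]` is
symmetric. -/
theorem dissipation_add_eq_boundary_pairing :
    R.dissipation + α * ((R.u3 0 * conj (R.v 0)).re - (R.u2 0 * conj (R.v1 0)).re) =
      m * ((R.f41 + d * R.f42) * conj (R.v 0 + d * R.v1 0)).re +
        J * (R.f42 * conj (R.v1 0)).re := by
  have h := congrArg Complex.re
    (congrArg₂ (· + ·) (congrArg (· * conj (R.v 0)) R.res3) (congrArg (· * conj (R.v1 0)) R.res4))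
  simp only [← Complex.ofReal_pow, Complex.add_re, Complex.sub_re, Complex.mul_re, Complex.mul_im,
    Complex.add_im, Complex.sub_im, Complex.I_re, Complex.I_im, Complex.ofReal_re,
    Complex.ofReal_im, Complex.conj_re, Complex.conj_im, map_add, map_mul,
    Complex.conj_ofReal] at h ⊢
  simp only [dissipation, Complex.sq_norm, Complex.normSq_apply, Complex.mul_re, Complex.conj_re,
    Complex.conj_im]
  linear_combination h

theorem dissipation_eq (hℓ : 0 < ℓ) :
    R.dissipation = (∫ x in (0:ℝ)..ℓ, R.f2 x * conj (R.v x)).re +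
      α * (∫ x in (0:ℝ)..ℓ, R.u2 x * conj (R.f1dd x)).re +
      m * ((R.f41 + d * R.f42) * conj (R.v 0 + d * R.v1 0)).re +
      J * (R.f42 * conj (R.v1 0)).re := by
  have h := congrArg Complex.re (R.integral_f2_mul_conj_v hℓ)
  have hI : ∀ r s : ℝ, (Complex.I * r * s).re = 0 := fun r s => by simp
  simp only [Complex.add_re, Complex.sub_re, Complex.re_ofReal_mul, hI] at h
  linear_combination R.dissipation_add_eq_boundary_pairing - h

theorem dissipation_le (hℓ : 0 < ℓ) (hα : 0 < α) (hm : 0 < m) (hJ : 0 < J) :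
    R.dissipation ≤ 4 * (normF R * normU R) := by
  have hN := R.normU_sq hℓ.le hα.le hm.le hJ.le
  have hF := R.normF_sq hℓ.le hα.le hm.le hJ.le
  have hN0 : 0 ≤ normU R := Real.sqrt_nonneg _
  have hF0 : 0 ≤ normF R := Real.sqrt_nonneg _
  have hL2 : ∀ f : ℝ → ℂ, 0 ≤ ∫ x in (0:ℝ)..ℓ, ‖f x‖ ^ 2 :=
    fun f => intervalIntegral.integral_nonneg hℓ.le fun x _ => sq_nonneg _
  have hu2 := mul_nonneg hα.le (hL2 R.u2)
  have hf1dd := mul_nonneg hα.le (hL2 R.f1dd)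
  have hwz : 0 ≤ m * ‖R.v 0 + d * R.v1 0‖ ^ 2 := by positivity
  have hz : 0 ≤ J * ‖R.v1 0‖ ^ 2 := by positivity
  have hf4 : 0 ≤ m * ‖R.f41 + d * R.f42‖ ^ 2 := by positivity
  have hf42 : 0 ≤ J * ‖R.f42‖ ^ 2 := by positivity
  have hpair : ∀ z w : ℂ, ‖z * conj w‖ ^ 2 ≤ ‖z‖ ^ 2 * ‖w‖ ^ 2 :=
    fun z w => by rw [norm_mul, Complex.norm_conj, mul_pow]
  have h_f2 := mul_re_le_mul_of_sq_norm_le zero_le_one (hL2 R.f2) hF0 hN0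
    (sq_norm_integral_mul_conj_le hℓ.le R.hf2c (HasDerivWithinAt.continuousOn R.hv1))
    (by linarith [hL2 R.v]) (by linarith [hL2 R.v])
  have h_f1dd := mul_re_le_mul_of_sq_norm_le hα.le (hL2 R.f1dd) hF0 hN0
    ((sq_norm_integral_mul_conj_le hℓ.le (HasDerivWithinAt.continuousOn R.hu3) R.hf1c).trans_eq
      (mul_comm _ _)) (by linarith [hL2 R.f2]) (by linarith [hL2 R.v])
  have h_f41 := mul_re_le_mul_of_sq_norm_le hm.le (sq_nonneg _) hF0 hN0
    (hpair (R.f41 + d * R.f42) (R.v 0 + d * R.v1 0))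
    (by linarith [hL2 R.f2]) (by linarith [hL2 R.v])
  have h_f42 := mul_re_le_mul_of_sq_norm_le hJ.le (sq_nonneg _) hF0 hN0 (hpair R.f42 (R.v1 0))
    (by linarith [hL2 R.f2]) (by linarith [hL2 R.v])
  rw [R.dissipation_eq hℓ]
  linarith

theorem abs_lam_mul_norm_u1_zero_le (hℓ : 0 < ℓ) :
    |R.lam| * ‖R.u1 0‖ ≤ ‖R.v1 0‖ + ‖R.f1d 0‖ := by
  have h : Complex.I * R.lam * R.u1 0 = R.v1 0 + R.f1d 0 := by
    linear_combination R.res1_deriv hℓ (left_mem_Icc.2 hℓ.le)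
  rw [← norm_I_mul_ofReal_mul, h]
  exact norm_add_le _ _

/-- Since `dγ ≤ 2γ*`, `D ≥ γ|w|² - dγ|w||z| + (d²γ/2)|z|²`, which equals both
`(γ/2)(|w|² + (|w| - d|z|)²)` and `γ(|w| - d|z|/2)² + (d²γ/4)|z|²`. -/
theorem sq_norm_tip_velocity_le_dissipation (hγ : 0 ≤ γ) (hd : 0 ≤ d) (hyp : d * γ ≤ 2 * γs) :
    γ * ‖R.v 0‖ ^ 2 ≤ 2 * R.dissipation ∧ γ * d ^ 2 * ‖R.v1 0‖ ^ 2 ≤ 4 * R.dissipation := by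
  have hre : -(‖R.v 0‖ * ‖R.v1 0‖) ≤ (R.v 0 * conj (R.v1 0)).re := by
    rw [← Complex.norm_conj (R.v1 0), ← norm_mul]
    exact neg_le_of_abs_le (Complex.abs_re_le_norm _)
  have hdγ : 0 ≤ d * γ := mul_nonneg hd hγ
  have hγs : d ^ 2 * γ * ‖R.v1 0‖ ^ 2 ≤ 2 * (d * γs * ‖R.v1 0‖ ^ 2) := by
    nlinarith [mul_le_mul_of_nonneg_left hyp (mul_nonneg hd (sq_nonneg ‖R.v1 0‖))]
  unfold dissipation
  constructor
  · nlinarith [mul_le_mul_of_nonneg_left hre hdγ,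
      mul_nonneg hγ (sq_nonneg (‖R.v 0‖ - d * ‖R.v1 0‖))]
  · nlinarith [mul_le_mul_of_nonneg_left hre hdγ,
      mul_nonneg hγ (sq_nonneg (2 * ‖R.v 0‖ - d * ‖R.v1 0‖))]

theorem norm_u3_zero_le (hα : 0 < α) (hm : 0 ≤ m) (hd : 0 ≤ d) (hγ : 0 ≤ γ) :
    α * ‖R.u3 0‖ ≤ m * ‖R.f41‖ + m * d * ‖R.f42‖ + γ * ‖R.v 0‖ +
      |R.lam| * (m * ‖R.v 0‖ + m * d * ‖R.v1 0‖) := by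
  have hmd := mul_nonneg hm hd
  have h : ((α : ℝ) : ℂ) * R.u3 0 = (m : ℂ) * R.f41 + ((m * d : ℝ) : ℂ) * R.f42 - (γ : ℂ) * R.v 0 -
      Complex.I * R.lam * ((m : ℂ) * R.v 0 + ((m * d : ℝ) : ℂ) * R.v1 0) := by
    push_cast; linear_combination R.res3
  rw [← norm_ofReal_mul_of_nonneg hα.le, h, ← norm_ofReal_mul_of_nonneg hm,
    ← norm_ofReal_mul_of_nonneg hmd, ← norm_ofReal_mul_of_nonneg hγ,
    ← norm_ofReal_mul_of_nonneg hm, ← norm_ofReal_mul_of_nonneg hmd]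
  exact norm_sub_le_of_le (norm_sub_le_of_le (norm_add_le _ _) le_rfl)
    ((norm_I_mul_ofReal_mul _ _).trans_le
      (mul_le_mul_of_nonneg_left (norm_add_le _ _) (abs_nonneg _)))

theorem norm_u2_zero_le (hα : 0 < α) (hm : 0 ≤ m) (hd : 0 ≤ d) (hJ : 0 ≤ J) (hγ : 0 ≤ γ)
    (hγs : 0 ≤ γs) :
    α * ‖R.u2 0‖ ≤ m * d * ‖R.f41‖ + (J + m * d ^ 2) * ‖R.f42‖ + d * γ * ‖R.v 0‖ +
      d * γs * ‖R.v1 0‖ + |R.lam| * (m * d * ‖R.v 0‖ + (J + m * d ^ 2) * ‖R.v1 0‖) := by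
  have hmd := mul_nonneg hm hd
  have hJmd : 0 ≤ J + m * d ^ 2 := by positivity
  have h : -(((α : ℝ) : ℂ) * R.u2 0) =
      ((m * d : ℝ) : ℂ) * R.f41 + ((J + m * d ^ 2 : ℝ) : ℂ) * R.f42 - ((d * γ : ℝ) : ℂ) * R.v 0 -
      ((d * γs : ℝ) : ℂ) * R.v1 0 -
      Complex.I * R.lam * (((m * d : ℝ) : ℂ) * R.v 0 + ((J + m * d ^ 2 : ℝ) : ℂ) * R.v1 0) := by
    push_cast; linear_combination R.res4
  rw [← norm_ofReal_mul_of_nonneg hα.le, ← norm_neg, h, ← norm_ofReal_mul_of_nonneg hmd,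
    ← norm_ofReal_mul_of_nonneg hJmd, ← norm_ofReal_mul_of_nonneg (mul_nonneg hd hγ),
    ← norm_ofReal_mul_of_nonneg (mul_nonneg hd hγs), ← norm_ofReal_mul_of_nonneg hmd,
    ← norm_ofReal_mul_of_nonneg hJmd]
  exact norm_sub_le_of_le (norm_sub_le_of_le (norm_sub_le_of_le (norm_add_le _ _) le_rfl) le_rfl)
    ((norm_I_mul_ofReal_mul _ _).trans_le
      (mul_le_mul_of_nonneg_left (norm_add_le _ _) (abs_nonneg _)))

noncomputable def boundaryNormSq : ℝ :=
  ‖R.v 0‖ ^ 2 + ‖R.v1 0‖ ^ 2 + ‖R.f41‖ ^ 2 + ‖R.f42‖ ^ 2 + ‖R.f1d 0‖ ^ 2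

theorem sq_norm_tip_velocity_le (hℓ : 0 < ℓ) (hα : 0 < α) (hm : 0 < m) (hd : 0 < d)
    (hJ : 0 < J) (hγ : 0 < γ) (hyp : d * γ ≤ 2 * γs) :
    ‖R.v 0‖ ^ 2 ≤ 8 / γ * (normU R * normF R) ∧
      ‖R.v1 0‖ ^ 2 ≤ 16 / (γ * d ^ 2) * (normU R * normF R) := by
  have hD := R.dissipation_le hℓ hα hm hJ
  obtain ⟨hw, hz⟩ := R.sq_norm_tip_velocity_le_dissipation hγ.le hd.le hyp
  constructor
  · rw [div_mul_eq_mul_div, le_div_iff₀ hγ]; linarith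
  · rw [div_mul_eq_mul_div, le_div_iff₀ (by positivity)]; linarith

theorem sq_norm_data_le (hℓ : 0 < ℓ) (hα : 0 < α) (hm : 0 < m) (hd : 0 ≤ d) (hJ : 0 < J) :
    ‖R.f41‖ ^ 2 ≤ (2 / m + 2 * d ^ 2 / J) * normF R ^ 2 ∧ ‖R.f42‖ ^ 2 ≤ 1 / J * normF R ^ 2 ∧
      ‖R.f1d 0‖ ^ 2 ≤ ℓ / α * normF R ^ 2 := by
  have hF := R.normF_sq hℓ.le hα.le hm.le hJ.le
  have hL2 : ∀ f : ℝ → ℂ, 0 ≤ ∫ x in (0:ℝ)..ℓ, ‖f x‖ ^ 2 :=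
    fun f => intervalIntegral.integral_nonneg hℓ.le fun x _ => sq_nonneg _
  have hf1dd := mul_nonneg hα.le (hL2 R.f1dd)
  have hf4 : 0 ≤ m * ‖R.f41 + d * R.f42‖ ^ 2 := by positivity
  have hf42 : 0 ≤ J * ‖R.f42‖ ^ 2 := by positivity
  have e_f4 : ‖R.f41 + d * R.f42‖ ^ 2 ≤ normF R ^ 2 / m := by
    rw [le_div_iff₀' hm]; linarith [hL2 R.f2]
  have e_f42 : ‖R.f42‖ ^ 2 ≤ normF R ^ 2 / J := by
    rw [le_div_iff₀' hJ]; linarith [hL2 R.f2]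
  have e_f1dd : ∫ x in (0:ℝ)..ℓ, ‖R.f1dd x‖ ^ 2 ≤ normF R ^ 2 / α := by
    rw [le_div_iff₀' hα]; linarith [hL2 R.f2]
  have hf41 : ‖R.f41‖ ≤ ‖R.f41 + d * R.f42‖ + d * ‖R.f42‖ := by
    calc ‖R.f41‖ = ‖(R.f41 + d * R.f42) - (d : ℝ) * R.f42‖ := by rw [add_sub_cancel_right]
      _ ≤ _ := by rw [← norm_ofReal_mul_of_nonneg hd]; exact norm_sub_le _ _
  have hf1d : ‖R.f1d 0‖ ^ 2 ≤ ℓ * ∫ x in (0:ℝ)..ℓ, ‖R.f1dd x‖ ^ 2 := by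
    have h := sq_norm_integral_mul_conj_le hℓ.le R.hf1c continuousOn_const (g := fun _ => 1)
    simp only [map_one, mul_one, norm_one, one_pow, intervalIntegral.integral_const, sub_zero,
      smul_eq_mul] at h
    rw [R.f1d_zero hℓ, norm_neg]
    linarith
  refine ⟨?_, by rwa [one_div_mul_eq_div], ?_⟩
  · calc ‖R.f41‖ ^ 2 ≤ 2 * ‖R.f41 + d * R.f42‖ ^ 2 + 2 * d ^ 2 * ‖R.f42‖ ^ 2 := by
          nlinarith [sq_nonneg (‖R.f41 + d * R.f42‖ - d * ‖R.f42‖), norm_nonneg R.f41]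
      _ ≤ 2 * (normF R ^ 2 / m) + 2 * d ^ 2 * (normF R ^ 2 / J) := by gcongr
      _ = _ := by ring
  · calc ‖R.f1d 0‖ ^ 2 ≤ ℓ * (normF R ^ 2 / α) := hf1d.trans (by gcongr)
      _ = _ := by ring

theorem boundaryNormSq_le (hℓ : 0 < ℓ) (hα : 0 < α) (hm : 0 < m) (hd : 0 < d) (hJ : 0 < J)
    (hγ : 0 < γ) (hyp : d * γ ≤ 2 * γs) :
    R.boundaryNormSq ≤ boundaryConst ℓ α m d J γ * (normU R * normF R + normF R ^ 2) := by
  obtain ⟨hw, hz⟩ := R.sq_norm_tip_velocity_le hℓ hα hm hd hJ hγ hyp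
  obtain ⟨hf41, hf42, hf1d⟩ := R.sq_norm_data_le hℓ hα hm hd.le hJ
  set Q := normU R * normF R + normF R ^ 2
  have hUF : normU R * normF R ≤ Q := le_add_of_nonneg_right (sq_nonneg _)
  have hFF : normF R ^ 2 ≤ Q :=
    le_add_of_nonneg_left (mul_nonneg (Real.sqrt_nonneg _) (Real.sqrt_nonneg _))
  calc R.boundaryNormSq
      ≤ 8 / γ * Q + 16 / (γ * d ^ 2) * Q + (2 / m + 2 * d ^ 2 / J) * Q + 1 / J * Q + ℓ / α * Q := by
        unfold boundaryNormSq
        gcongr ?_ + ?_ + ?_ + ?_ + ?_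
        · exact hw.trans (by gcongr)
        · exact hz.trans (by gcongr)
        · exact hf41.trans (by gcongr)
        · exact hf42.trans (by gcongr)
        · exact hf1d.trans (by gcongr)
    _ = boundaryConst ℓ α m d J γ * Q := by unfold boundaryConst; ring

theorem le_sqrt_boundaryNormSq :
    ‖R.v 0‖ ≤ √R.boundaryNormSq ∧ ‖R.v1 0‖ ≤ √R.boundaryNormSq ∧ ‖R.f41‖ ≤ √R.boundaryNormSq ∧
      ‖R.f42‖ ≤ √R.boundaryNormSq ∧ ‖R.f1d 0‖ ≤ √R.boundaryNormSq := by
  have := sq_nonneg ‖R.v 0‖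
  have := sq_nonneg ‖R.v1 0‖
  have := sq_nonneg ‖R.f41‖
  have := sq_nonneg ‖R.f42‖
  have := sq_nonneg ‖R.f1d 0‖
  refine ⟨?_, ?_, ?_, ?_, ?_⟩ <;> apply Real.le_sqrt_of_sq_le <;> unfold boundaryNormSq <;> linarith

theorem norm_u1_mul_norm_u3_le (hℓ : 0 < ℓ) (hα : 0 < α) (hm : 0 ≤ m) (hd : 0 ≤ d) (hγ : 0 ≤ γ)
    (hlam : 1 ≤ |R.lam|) :
    α * (‖R.u1 0‖ * ‖R.u3 0‖) ≤ 2 * (2 * m + 2 * m * d + γ) * R.boundaryNormSq := by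
  obtain ⟨hw, hz, hf41, hf42, hf1d⟩ := R.le_sqrt_boundaryNormSq
  set B := √R.boundaryNormSq
  have hB : B ^ 2 = R.boundaryNormSq := Real.sq_sqrt (by unfold boundaryNormSq; positivity)
  have hu1 : |R.lam| * ‖R.u1 0‖ ≤ 2 * B := (R.abs_lam_mul_norm_u1_zero_le hℓ).trans (by linarith)
  have hu3 : α * ‖R.u3 0‖ ≤ (m * B + m * d * B + γ * B) + |R.lam| * (m * B + m * d * B) :=
    (R.norm_u3_zero_le hα hm hd hγ).trans (by gcongr)
  have h := mul_le_of_mul_le_of_le_add_mul hlam (norm_nonneg _) (by positivity) (by positivity)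
    hu1 hu3
  linear_combination h + 2 * (2 * m + 2 * m * d + γ) * hB

theorem norm_u1_mul_norm_u2_le (hℓ : 0 < ℓ) (hα : 0 < α) (hm : 0 ≤ m) (hd : 0 ≤ d) (hJ : 0 ≤ J)
    (hγ : 0 ≤ γ) (hγs : 0 ≤ γs) (hlam : 1 ≤ |R.lam|) :
    α * (‖R.u1 0‖ * ‖R.u2 0‖) ≤
      2 * (2 * m * d + 2 * (J + m * d ^ 2) + d * γ + d * γs) * R.boundaryNormSq := by
  obtain ⟨hw, hz, hf41, hf42, hf1d⟩ := R.le_sqrt_boundaryNormSq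
  set B := √R.boundaryNormSq
  have hB : B ^ 2 = R.boundaryNormSq := Real.sq_sqrt (by unfold boundaryNormSq; positivity)
  have hu1 : |R.lam| * ‖R.u1 0‖ ≤ 2 * B := (R.abs_lam_mul_norm_u1_zero_le hℓ).trans (by linarith)
  have hu2 : α * ‖R.u2 0‖ ≤ (m * d * B + (J + m * d ^ 2) * B + d * γ * B + d * γs * B) +
      |R.lam| * (m * d * B + (J + m * d ^ 2) * B) :=
    (R.norm_u2_zero_le hα hm hd hJ hγ hγs).trans (by gcongr)
  have h := mul_le_of_mul_le_of_le_add_mul hlam (norm_nonneg _) (by positivity) (by positivity)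
    hu1 hu2
  linear_combination h + 2 * (2 * m * d + 2 * (J + m * d ^ 2) + d * γ + d * γs) * hB

end ResolventSol

theorem resolvent_boundary_terms_general (ℓ α m d J γ γs : ℝ)
    (hℓ : 0 < ℓ) (hα : 0 < α) (hm : 0 < m) (hd : 0 < d) (hJ : 0 < J)
    (hγ : 0 < γ) (hyp : d * γ ≤ 2 * γs) :
    ∃ c > 0, ∀ R : ResolventSol ℓ α m d J γ γs, 1 ≤ |R.lam| →
      ‖R.u1 0‖ * ‖R.u3 0‖ ≤ c * (normU R * normF R + (normF R) ^ 2) ∧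
      ‖R.u1 0‖ * ‖R.u2 0‖ ≤ c * (normU R * normF R + (normF R) ^ 2) := by
  have hγs : 0 ≤ γs := by linarith [mul_pos hd hγ]
  set c₃ := 2 * (2 * m + 2 * m * d + γ)
  set c₂ := 2 * (2 * m * d + 2 * (J + m * d ^ 2) + d * γ + d * γs)
  set κ := boundaryConst ℓ α m d J γ
  have hκ : 0 < κ := by unfold κ boundaryConst; positivity
  refine ⟨(c₃ + c₂) * κ / α, by positivity, fun R hlam => ?_⟩
  have hQ : 0 ≤ normU R * normF R + normF R ^ 2 :=
    add_nonneg (mul_nonneg (Real.sqrt_nonneg _) (Real.sqrt_nonneg _)) (sq_nonneg _)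
  have hS := R.boundaryNormSq_le hℓ hα hm hd hJ hγ hyp
  have h₃ := R.norm_u1_mul_norm_u3_le hℓ hα hm.le hd.le hγ.le hlam
  have h₂ := R.norm_u1_mul_norm_u2_le hℓ hα hm.le hd.le hJ.le hγ.le hγs hlam
  have hc₃ : 0 ≤ c₃ := by positivity
  have hc₂ : 0 ≤ c₂ := by positivity
  constructor <;> rw [div_mul_eq_mul_div, le_div_iff₀ hα] <;>
    nlinarith [mul_le_mul_of_nonneg_left hS hc₃, mul_le_mul_of_nonneg_left hS hc₂,
      mul_nonneg (mul_nonneg hc₂ hκ.le) hQ, mul_nonneg (mul_nonneg hc₃ hκ.le) hQ]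

/-- Boundary-term estimates for the resolvent system: for `|λ| ≥ 1`,
`|u'(0)| |u'''(0)| ≤ c(‖U‖‖F‖ + ‖F‖²)` and `|u'(0)| |u''(0)| ≤ c(‖U‖‖F‖ + ‖F‖²)`. -/
theorem resolvent_boundary_terms (ℓ α m d J γ γs : ℝ)
    (hℓ : 0 < ℓ) (hα : 0 < α) (hm : 0 < m) (hd : 0 < d) (hJ : 0 < J)
    (hγ : 0 < γ) (hγs : 0 < γs) (hyp : d * γ ≤ 2 * γs) :
    ∃ c > 0, ∀ R : ResolventSol ℓ α m d J γ γs, 1 ≤ |R.lam| →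
      ‖R.u1 0‖ * ‖R.u3 0‖ ≤ c * (normU R * normF R + (normF R) ^ 2) ∧
      ‖R.u1 0‖ * ‖R.u2 0‖ ≤ c * (normU R * normF R + (normF R) ^ 2) :=
  resolvent_boundary_terms_general ℓ α m d J γ γs hℓ hα hm hd hJ hγ hyp
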